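/- Let I be a finite set, let h : {−1,1}^I → ℝ, let n ≥ 1, and let J₁, …, J_n, W be pairwise disjoint subsets of I. Then ∑_{S ⊆ I : S∩W=∅ and S∩J_j≠∅ for all j} ĥ(S)² = ∑_{k=0}^{n} (−1)^k · ∑_{1 ≤ j₁ < ⋯ < j_k ≤ n} 𝐄[ ( 𝐄[ h | 𝓕_{(J_{j₁} ∪ ⋯ ∪ J_{j_k} ∪ W)^c} ] )² ], where for k = 0 the inner sum is the single term 𝐄[ (𝐄[h | 𝓕_{W^c}])² ]. -/
import Mathlib


open scoped BigOperators

namespace Cube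

variable {I : Type*} [Fintype I] [DecidableEq I]

/-- Expectation with respect to the uniform probability measure on the discrete cube
`{-1,1}^I` (encoded as `I → Bool`, with `true` standing for `+1`). -/
noncomputable def expect (f : (I → Bool) → ℝ) : ℝ :=
  (∑ ω : I → Bool, f ω) / (Fintype.card (I → Bool) : ℝ)

/-- The Fourier character `χ_S(ω) = ∏_{i∈S} ω_i`. -/
noncomputable def chi (S : Finset I) (ω : I → Bool) : ℝ :=
  ∏ i ∈ S, (if ω i then (1 : ℝ) else -1)

/-- The Fourier coefficient `ĥ(S) = 𝐄[h·χ_S]`. -/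
noncomputable def fourier (h : (I → Bool) → ℝ) (S : Finset I) : ℝ :=
  expect fun ω => h ω * chi S ω

/-- The unnormalized spectral measure `𝐐̂_h[𝒜] = ∑_{S∈𝒜} ĥ(S)²`. -/
noncomputable def Qhat (h : (I → Bool) → ℝ) (𝒜 : Finset I → Prop) : ℝ := by
  classical
  exact ∑ S : Finset I, if 𝒜 S then fourier h S ^ 2 else 0

/-- The conditional expectation `𝐄[h | 𝓕_B]` given the coordinates in `B`:
`𝐄[h | 𝓕_B](ω) = 2^{-|I∖B|} · ∑_{ω' : ω'_i = ω_i ∀ i∈B} h(ω')`. -/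
noncomputable def condExp (B : Finset I) (h : (I → Bool) → ℝ) (ω : I → Bool) : ℝ := by
  classical
  exact (∑ ω' : I → Bool, if ∀ i ∈ B, ω' i = ω i then h ω' else 0) /
    2 ^ (Finset.univ \ B).card

/-- `J` is pivotal for `h` at `ω`: changing the values of the coordinates in `J` can
change the value of `h`. -/
def Pivotal (h : (I → Bool) → ℝ) (J : Finset I) (ω : I → Bool) : Prop :=
  ∃ ω' : I → Bool, (∀ i, i ∉ J → ω' i = ω i) ∧ h ω' ≠ h ω

/-- `J 0, …, J (n-1)` are jointly pivotal for `h` at `ω`: for every `j₀` there is a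
choice of configuration in `⋃_{j ≠ j₀} J j` making `J j₀` pivotal. -/
def JointlyPivotal (h : (I → Bool) → ℝ) {n : ℕ} (J : Fin n → Finset I)
    (ω : I → Bool) : Prop :=
  ∀ j₀ : Fin n, ∃ ω' : I → Bool,
    (∀ i, (∀ j, j ≠ j₀ → i ∉ J j) → ω' i = ω i) ∧ Pivotal h (J j₀) ω'


open Finset in
lemma sum_prod_bool (f : I → Bool → ℝ) :
    ∑ ω : I → Bool, ∏ i, f i (ω i) = ∏ i, (f i true + f i false) := by
  calc ∑ ω : I → Bool, ∏ i, f i (ω i)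
      = ∑ ω ∈ Fintype.piFinset (fun _ : I => (univ : Finset Bool)), ∏ i, f i (ω i) := by
        rw [Fintype.piFinset_univ]
    _ = ∏ i, ∑ b : Bool, f i b := (Finset.prod_univ_sum _ _).symm
    _ = ∏ i, (f i true + f i false) := by simp

open Finset in
lemma chi_eq (S : Finset I) (ω : I → Bool) :
    chi S ω = ∏ i, (if i ∈ S then (if ω i then (1:ℝ) else -1) else 1) := by
  rw [chi, ← Finset.prod_filter, Finset.filter_mem_eq_inter, Finset.univ_inter]

open Finset in
lemma card_fun_real : ((Fintype.card (I → Bool) : ℝ)) = 2 ^ Fintype.card I := by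
  simp [Fintype.card_fun]

open Finset in
lemma sum_chi_mul_chi (ω ω' : I → Bool) :
    ∑ S : Finset I, chi S ω * chi S ω'
      = if ω = ω' then (Fintype.card (I → Bool) : ℝ) else 0 := by
  have h1 : ∀ S : Finset I, chi S ω * chi S ω'
      = ∏ i ∈ S, ((if ω i then (1:ℝ) else -1) * (if ω' i then 1 else -1)) := by
    intro S; rw [chi, chi, Finset.prod_mul_distrib]
  simp only [h1]
  have h2 : ∑ S : Finset I, ∏ i ∈ S, ((if ω i then (1:ℝ) else -1) * (if ω' i then 1 else -1))
      = ∏ i, (((if ω i then (1:ℝ) else -1) * (if ω' i then 1 else -1)) + 1) := by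
    rw [Finset.prod_add]
    simp [← Finset.powerset_univ]
  rw [h2]
  have h3 : ∀ i, (((if ω i then (1:ℝ) else -1) * (if ω' i then 1 else -1)) + 1)
      = if ω i = ω' i then 2 else 0 := by
    intro i; cases hω : ω i <;> cases hω' : ω' i <;> norm_num
  simp only [h3]
  by_cases h : ω = ω'
  · subst h; simp [card_fun_real]
  · obtain ⟨i, hi⟩ := Function.ne_iff.mp h
    rw [if_neg h]
    exact Finset.prod_eq_zero (mem_univ i) (if_neg hi)

open Finset in
lemma inversion (g : (I → Bool) → ℝ) (ω : I → Bool) :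
    ∑ S : Finset I, fourier g S * chi S ω = g ω := by
  have hN : ((Fintype.card (I → Bool) : ℝ)) ≠ 0 := by positivity
  simp only [fourier, expect, div_mul_eq_mul_div, Finset.sum_mul, ← Finset.sum_div]
  rw [Finset.sum_comm]
  have key : ∀ ω' : I → Bool, ∑ S : Finset I, g ω' * chi S ω' * chi S ω
      = g ω' * (if ω' = ω then (Fintype.card (I → Bool) : ℝ) else 0) := by
    intro ω'
    rw [← sum_chi_mul_chi ω' ω, Finset.mul_sum]
    simp [mul_assoc]
  simp only [key]
  rw [Finset.sum_eq_single ω]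
  · simp [hN]
  · intro b _ hb; simp [hb]
  · simp

open Finset in
lemma parseval (g : (I → Bool) → ℝ) :
    expect (fun ω => g ω ^ 2) = ∑ S : Finset I, fourier g S ^ 2 := by
  have key : ∀ ω, g ω ^ 2 = (∑ S : Finset I, fourier g S * chi S ω) * g ω := by
    intro ω; rw [inversion]; ring
  simp only [expect, key, Finset.sum_mul]
  rw [Finset.sum_comm, Finset.sum_div]
  refine Finset.sum_congr rfl fun S _ => ?_
  have h2 : ∑ ω : I → Bool, fourier g S * chi S ω * g ω
      = fourier g S * ∑ ω : I → Bool, g ω * chi S ω := by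
    rw [Finset.mul_sum]; refine Finset.sum_congr rfl fun ω _ => by ring
  rw [h2, mul_div_assoc, fourier, expect]
  ring

open Finset Classical in
lemma agree_chi_sum (B S : Finset I) (ω' : I → Bool) :
    ∑ ω : I → Bool, (if ∀ i ∈ B, ω' i = ω i then chi S ω else 0)
      = if S ⊆ B then 2 ^ (univ \ B).card * chi S ω' else 0 := by
  have key : ∀ ω : I → Bool, (if ∀ i ∈ B, ω' i = ω i then chi S ω else 0)
      = ∏ i, ((if i ∈ B then (if ω' i = ω i then (1:ℝ) else 0) else 1)
          * (if i ∈ S then (if ω i then (1:ℝ) else -1) else 1)) := by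
    intro ω
    rw [Finset.prod_mul_distrib, ← chi_eq]
    have hind : ∏ i, (if i ∈ B then (if ω' i = ω i then (1:ℝ) else 0) else 1)
        = if ∀ i ∈ B, ω' i = ω i then 1 else 0 := by
      rw [← Finset.prod_filter, Finset.filter_mem_eq_inter, Finset.univ_inter,
        Finset.prod_boole]
      simp
    rw [hind]
    by_cases h : ∀ i ∈ B, ω' i = ω i <;> simp [h]
  simp only [key]
  rw [sum_prod_bool (fun i b => (if i ∈ B then (if ω' i = b then (1:ℝ) else 0) else 1)
      * (if i ∈ S then (if b then (1:ℝ) else -1) else 1))]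
  have hval : ∀ i : I,
      ((if i ∈ B then (if ω' i = true then (1:ℝ) else 0) else 1)
          * (if i ∈ S then (1:ℝ) else 1)
        + (if i ∈ B then (if ω' i = false then (1:ℝ) else 0) else 1)
          * (if i ∈ S then (-1:ℝ) else 1))
      = (if i ∈ S then (if i ∈ B then (if ω' i then (1:ℝ) else -1) else 0)
          else (if i ∈ B then 1 else 2)) := by
    intro i
    by_cases hB : i ∈ B <;> by_cases hS : i ∈ S <;> cases hω : ω' i <;>
      simp [hB, hS, hω] <;> norm_num
  have htarget : ∏ i, ((if i ∈ B then (if ω' i = true then (1:ℝ) else 0) else 1)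
          * (if i ∈ S then (if (true:Bool) then (1:ℝ) else -1) else 1)
        + (if i ∈ B then (if ω' i = false then (1:ℝ) else 0) else 1)
          * (if i ∈ S then (if (false:Bool) then (1:ℝ) else -1) else 1))
      = ∏ i, (if i ∈ S then (if i ∈ B then (if ω' i then (1:ℝ) else -1) else 0)
          else (if i ∈ B then 1 else 2)) := by
    refine Finset.prod_congr rfl fun i _ => ?_
    simpa using hval i
  rw [htarget]
  by_cases hSB : S ⊆ B
  · rw [if_pos hSB]
    have hprod : ∏ i, (if i ∈ S then (if i ∈ B then (if ω' i then (1:ℝ) else -1) else 0)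
          else (if i ∈ B then 1 else 2))
        = ∏ i, ((if i ∈ S then (if ω' i then (1:ℝ) else -1) else 1)
            * (if i ∈ B then 1 else 2)) := by
      refine Finset.prod_congr rfl fun i _ => ?_
      by_cases hS : i ∈ S
      · have hB : i ∈ B := hSB hS
        simp [hS, hB]
      · simp [hS]
    rw [hprod, Finset.prod_mul_distrib, ← chi_eq]
    have h2 : ∏ i, (if i ∈ B then (1:ℝ) else 2) = 2 ^ (univ \ B).card := by
      rw [← Finset.prod_sdiff (Finset.subset_univ B)]
      rw [Finset.prod_eq_one (fun i hi => if_pos hi), mul_one]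
      rw [Finset.prod_congr rfl (fun i hi => if_neg (Finset.mem_sdiff.mp hi).2)]
      rw [Finset.prod_const]
    rw [h2]; ring
  · rw [if_neg hSB]
    obtain ⟨i, hiS, hiB⟩ := Finset.not_subset.mp hSB
    refine Finset.prod_eq_zero (mem_univ i) ?_
    simp [hiS, hiB]

open Finset Classical in
lemma fourier_condExp (B : Finset I) (h : (I → Bool) → ℝ) (S : Finset I) :
    fourier (condExp B h) S = if S ⊆ B then fourier h S else 0 := by
  have hstep : ∑ ω : I → Bool, condExp B h ω * chi S ω
      = (∑ ω' : I → Bool, h ω' *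
          (if S ⊆ B then (2:ℝ) ^ (univ \ B).card * chi S ω' else 0))
        / 2 ^ (univ \ B).card := by
    simp only [condExp, div_mul_eq_mul_div, ← Finset.sum_div]
    congr 1
    have hpush : ∀ ω : I → Bool,
        (∑ ω' : I → Bool, if ∀ i ∈ B, ω' i = ω i then h ω' else 0) * chi S ω
          = ∑ ω' : I → Bool, (if ∀ i ∈ B, ω' i = ω i then h ω' * chi S ω else 0) := by
      intro ω; rw [Finset.sum_mul]
      refine Finset.sum_congr rfl fun ω' _ => by split <;> simp
    simp only [hpush]
    rw [Finset.sum_comm]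
    refine Finset.sum_congr rfl fun ω' _ => ?_
    rw [← agree_chi_sum B S ω', Finset.mul_sum]
    refine Finset.sum_congr rfl fun ω _ => by split <;> simp
  rw [fourier, expect, hstep]
  by_cases hSB : S ⊆ B
  · simp only [if_pos hSB]
    have h2 : ((2:ℝ) ^ (univ \ B).card) ≠ 0 := by positivity
    have hmul : ∑ ω' : I → Bool, h ω' * ((2:ℝ) ^ (univ \ B).card * chi S ω')
        = (2:ℝ) ^ (univ \ B).card * ∑ ω' : I → Bool, h ω' * chi S ω' := by
      rw [Finset.mul_sum]; exact Finset.sum_congr rfl fun _ _ => by ring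
    rw [hmul, mul_div_cancel_left₀ _ h2, fourier, expect]
  · simp [if_neg hSB]

open Finset Classical in
lemma expect_condExp_sq (B : Finset I) (h : (I → Bool) → ℝ) :
    expect (fun ω => condExp B h ω ^ 2)
      = ∑ S : Finset I, (if S ⊆ B then fourier h S ^ 2 else 0) := by
  rw [parseval]
  refine Finset.sum_congr rfl fun S _ => ?_
  rw [fourier_condExp]
  split <;> simp

open Finset in
lemma sum_powerset_neg_one_pow_card_real {α : Type*} [DecidableEq α] (T : Finset α) :
    ∑ A ∈ T.powerset, (-1:ℝ) ^ A.card = if T = ∅ then 1 else 0 := by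
  have hz := Finset.sum_powerset_neg_one_pow_card (x := T)
  calc ∑ A ∈ T.powerset, (-1:ℝ) ^ A.card
      = ((∑ A ∈ T.powerset, (-1:ℤ) ^ A.card : ℤ) : ℝ) := by push_cast; rfl
    _ = _ := by rw [hz]; split <;> simp

open Classical in
/-- **Lemma (inclusion–exclusion formula for the spectral mass).**
Let `I` be a finite set, `h : {-1,1}^I → ℝ`, `n ≥ 1`, and let `J₁, …, J_n, W` be
pairwise disjoint subsets of `I`.  Then
`∑_{S : S∩W=∅, S∩J_j≠∅ ∀j} ĥ(S)²
  = ∑_{k=0}^{n} (-1)^k ∑_{j₁<⋯<j_k} 𝐄[ (𝐄[h | 𝓕_{(J_{j₁}∪⋯∪J_{j_k}∪W)^c}])² ]`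
(for `k = 0` the inner sum is the single term `𝐄[(𝐄[h|𝓕_{W^c}])²]`). -/
theorem spectral_mass_inclusion_exclusion {I : Type*} [Fintype I] [DecidableEq I]
    (h : (I → Bool) → ℝ) (n : ℕ) (hn : 1 ≤ n) (J : Fin n → Finset I) (W : Finset I)
    (hJJ : ∀ j j' : Fin n, j ≠ j' → Disjoint (J j) (J j'))
    (hJW : ∀ j : Fin n, Disjoint (J j) W) :
    (∑ S : Finset I,
        if S ∩ W = ∅ ∧ ∀ j : Fin n, (S ∩ J j).Nonempty then fourier h S ^ 2 else 0)
      = ∑ k ∈ Finset.range (n + 1), (-1 : ℝ) ^ k *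
          ∑ A ∈ (Finset.univ : Finset (Fin n)).powersetCard k,
            expect (fun ω => (condExp (Finset.univ \ (A.biUnion J ∪ W)) h ω) ^ 2) := by
  classical
  have hrw : ∀ A : Finset (Fin n),
      expect (fun ω => condExp (Finset.univ \ (A.biUnion J ∪ W)) h ω ^ 2)
        = ∑ S : Finset I,
            (if S ⊆ Finset.univ \ (A.biUnion J ∪ W) then fourier h S ^ 2 else 0) :=
    fun A => expect_condExp_sq _ h
  simp only [hrw]
  have hRHS : ∑ k ∈ Finset.range (n + 1), (-1 : ℝ) ^ k *
        ∑ A ∈ (Finset.univ : Finset (Fin n)).powersetCard k,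
          ∑ S : Finset I,
            (if S ⊆ Finset.univ \ (A.biUnion J ∪ W) then fourier h S ^ 2 else 0)
      = ∑ A ∈ (Finset.univ : Finset (Fin n)).powerset, (-1 : ℝ) ^ A.card *
          ∑ S : Finset I,
            (if S ⊆ Finset.univ \ (A.biUnion J ∪ W) then fourier h S ^ 2 else 0) := by
    rw [Finset.sum_powerset]
    refine Finset.sum_congr (by simp) fun k _ => ?_
    rw [Finset.mul_sum]
    exact Finset.sum_congr rfl fun A hA => by
      rw [(Finset.mem_powersetCard.mp hA).2]
  rw [hRHS]
  simp only [Finset.mul_sum]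
  rw [Finset.sum_comm]
  refine Finset.sum_congr rfl fun S _ => ?_
  set T : Finset (Fin n) := Finset.univ.filter (fun j => S ∩ J j = ∅) with hT
  have hcond : ∀ A : Finset (Fin n),
      (S ⊆ Finset.univ \ (A.biUnion J ∪ W)) ↔ (S ∩ W = ∅ ∧ A ⊆ T) := by
    intro A
    rw [Finset.subset_sdiff, Finset.disjoint_union_right, Finset.disjoint_biUnion_right]
    simp only [Finset.subset_univ, true_and, Finset.disjoint_iff_inter_eq_empty]
    constructor
    · rintro ⟨h1, h2⟩
      exact ⟨h2, fun j hj => by simp [hT, h1 j hj]⟩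
    · rintro ⟨h2, h1⟩
      refine ⟨fun j hj => ?_, h2⟩
      have := h1 hj
      simpa [hT] using this
  simp only [hcond]
  by_cases hW : S ∩ W = ∅
  · simp only [hW, true_and]
    have hstep : ∀ A : Finset (Fin n),
        (-1 : ℝ) ^ A.card * (if A ⊆ T then fourier h S ^ 2 else 0)
          = (if A ∈ T.powerset then (-1 : ℝ) ^ A.card * fourier h S ^ 2 else 0) := by
      intro A
      by_cases hA : A ⊆ T <;> simp [Finset.mem_powerset, hA]
    simp only [hstep]
    rw [Finset.sum_ite_mem, Finset.powerset_univ, Finset.univ_inter,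
      ← Finset.sum_mul, sum_powerset_neg_one_pow_card_real]
    have hTempty : T = ∅ ↔ ∀ j : Fin n, (S ∩ J j).Nonempty := by
      simp [hT, Finset.filter_eq_empty_iff, Finset.nonempty_iff_ne_empty]
    by_cases hNE : ∀ j : Fin n, (S ∩ J j).Nonempty
    · rw [if_pos hNE, if_pos (hTempty.mpr hNE), one_mul]
    · rw [if_neg hNE, if_neg (fun hc => hNE (hTempty.mp hc)), zero_mul]
  · simp [hW]


end Cube
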